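/- Let A be a commutative ring, λ ∈ A a non-nilpotent element, and T = [Nᵗ, Dᵗ]ᵗ an (m+n)×m matrix over A with det D a nonzerodivisor of A. Suppose there exist a positive integer r, a matrix K over A, and an m-element subset I of {1,…,m+n} with λʳ T = K Δ_I T. Then over the localization A_λ: (i) the m×m matrix Δ_I T is nonsingular over A_λ (its determinant is a nonzerodivisor of A_λ); and (ii) there exists a matrix X over A_λ such that the (m+n)×(m+n) matrix [λ⁻ʳK, X] is invertible over A_λ and T = [λ⁻ʳK, X] · [(Δ_I T)ᵗ, O]ᵗ. -/

import Mathlib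

open Matrix

/-- The selection matrix `Δ_I`. -/
noncomputable def deltaMat {A : Type*} [CommRing A] (m N : ℕ) (I : Finset (Fin N))
    (h : I.card = m) : Matrix (Fin m) (Fin N) A :=
  Matrix.of fun k j => if j = (I.orderIsoOfFin h k : Fin N) then 1 else 0

/-- The stacked matrix `T = [Nᵗ, Dᵗ]ᵗ`. -/
def stackND {A : Type*} [CommRing A] {n m : ℕ} (N : Matrix (Fin n) (Fin m) A)
    (D : Matrix (Fin m) (Fin m) A) : Matrix (Fin (n + m)) (Fin m) A :=
  Matrix.of (Fin.addCases (motive := fun _ => Fin m → A) (fun i => N i) (fun j => D j))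

/-!
Over `A_λ` the hypothesis reads `T = K' M` with `K' = λ⁻ʳ K` and `M = Δ_I T`. The last `m` rows
give `D = K'_D M` (`K'_D` the last `m` rows of `K'`), so `det M` divides the nonzerodivisor
`det D` and is one itself; in particular `M` is right-cancellable. Applying `Δ_I` to `T = K' M`
gives `(Δ_I K') M = M`, hence `Δ_I K' = 1`. With `X = Δ_{Iᶜ}ᵀ` (the standard basis columns
outside `I`), the matrix `[K', X]` then has the explicit left inverse
`[Δ_I; Δ_{Iᶜ} - Δ_{Iᶜ} K' Δ_I]`, and `T = K' M = [K', X] [M; 0]`.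
-/

section Selection

variable {R : Type*} [CommRing R] {m k N : ℕ}

lemma deltaMat_mul_apply {α : Type*} (I : Finset (Fin N)) (hI : I.card = m)
    (P : Matrix (Fin N) α R) (a : Fin m) (b : α) :
    (deltaMat (A := R) m N I hI * P) a b = P (I.orderIsoOfFin hI a) b := by
  simp only [deltaMat, mul_apply, of_apply, ite_mul, one_mul, zero_mul,
    Finset.sum_ite_eq', Finset.mem_univ, if_true]

lemma deltaMat_map {S : Type*} [CommRing S] (f : R →+* S) (I : Finset (Fin N)) (hI : I.card = m) :
    (deltaMat (A := R) m N I hI).map f = deltaMat m N I hI := by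
  ext i j
  simp only [deltaMat, map_apply, of_apply]
  split_ifs <;> simp

lemma deltaMat_mul_deltaMat_transpose (I : Finset (Fin N)) (hI : I.card = m) :
    deltaMat (A := R) m N I hI * (deltaMat (A := R) m N I hI)ᵀ = 1 := by
  ext a b
  rw [deltaMat_mul_apply, transpose_apply, deltaMat, of_apply, one_apply]
  simp only [Subtype.coe_inj, EmbeddingLike.apply_eq_iff_eq]

lemma deltaMat_mul_deltaMat_compl_transpose (I : Finset (Fin N)) (hI : I.card = m)
    (hc : Iᶜ.card = k) :
    deltaMat (A := R) m N I hI * (deltaMat (A := R) k N Iᶜ hc)ᵀ = 0 := by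
  ext a b
  rw [deltaMat_mul_apply, transpose_apply, deltaMat, of_apply, Matrix.zero_apply, if_neg]
  exact fun h => Finset.mem_compl.mp (Iᶜ.orderIsoOfFin hc b).2 (h ▸ (I.orderIsoOfFin hI a).2)

end Selection

lemma stackND_map {R S : Type*} [CommRing R] [CommRing S] (f : R →+* S) {n m : ℕ}
    (N : Matrix (Fin n) (Fin m) R) (D : Matrix (Fin m) (Fin m) R) :
    (stackND N D).map f = stackND (N.map f) (D.map f) := by
  ext i j
  refine Fin.addCases (fun i => ?_) (fun i => ?_) i <;> simp [stackND]

lemma det_mem_nonZeroDivisors_of_stackND_eq_mul {R : Type*} [CommRing R] {n m : ℕ}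
    {N : Matrix (Fin n) (Fin m) R} {D M : Matrix (Fin m) (Fin m) R}
    {K : Matrix (Fin (n + m)) (Fin m) R} (hD : D.det ∈ nonZeroDivisors R)
    (h : stackND N D = K * M) : M.det ∈ nonZeroDivisors R := by
  have hDK : D = K.submatrix (Fin.natAdd n) id * M := by
    rw [← submatrix_id_id M, ← submatrix_mul _ _ _ _ _ Function.bijective_id, ← h]
    ext i j
    simp [stackND]
  rw [hDK, det_mul] at hD
  exact (mul_mem_nonZeroDivisors.mp hD).2

lemma fromRows_mul_fromCols_eq_one {R ι κ₁ κ₂ : Type*} [Ring R] [Fintype ι] [Fintype κ₁]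
    [DecidableEq κ₁] [Fintype κ₂] [DecidableEq κ₂]
    {P : Matrix κ₁ ι R} {Pc : Matrix κ₂ ι R} {K : Matrix ι κ₁ R} {X : Matrix ι κ₂ R}
    (hK : P * K = 1) (hPX : P * X = 0) (hX : Pc * X = 1) :
    fromRows P (Pc - Pc * K * P) * fromCols K X = 1 := by
  rw [fromRows_mul_fromCols, Matrix.sub_mul, Matrix.sub_mul, Matrix.mul_assoc (Pc * K),
    Matrix.mul_assoc (Pc * K), hK, hPX, hX, Matrix.mul_one, Matrix.mul_zero, sub_self, sub_zero,
    fromBlocks_one]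

lemma isUnit_det_submatrix_of_mul_eq_one {R ι κ : Type*} [CommRing R] [Fintype ι]
    [DecidableEq ι] [Fintype κ] [DecidableEq κ] {L : Matrix κ ι R} {Q : Matrix ι κ R}
    (h : L * Q = 1) (e : ι ≃ κ) : IsUnit (Q.submatrix id e).det :=
  isUnit_det_of_left_inverse (B := L.submatrix e id) <| by
    rw [← Equiv.coe_refl, submatrix_mul_equiv, h, submatrix_one_equiv]

lemma map_eq_invSelf_pow_smul_mul {A S : Type*} [CommRing A] [CommRing S] [Algebra A S]
    (lam : A) [IsLocalization.Away lam S] (r : ℕ) {ι κ μ : Type*} [Fintype μ]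
    {T : Matrix ι κ A} {K : Matrix ι μ A} {M : Matrix μ κ A} (h : lam ^ r • T = K * M) :
    T.map (algebraMap A S) =
      (IsLocalization.Away.invSelf (S := S) lam ^ r • K.map (algebraMap A S)) *
        M.map (algebraMap A S) := by
  have hmap := congrArg (map · (algebraMap A S)) h
  rw [Matrix.map_mul, Matrix.map_smulₛₗ _ (algebraMap A S) _ (_root_.map_mul _ _)] at hmap
  rw [smul_mul, ← hmap, smul_smul, _root_.map_pow, ← mul_pow, mul_comm,
    IsLocalization.Away.mul_invSelf, one_pow, one_smul]

theorem stmt_11_general {A : Type*} [CommRing A] {n m : ℕ}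
    (lam : A)
    (N : Matrix (Fin n) (Fin m) A) (D : Matrix (Fin m) (Fin m) A)
    (hD : D.det ∈ nonZeroDivisors A)
    (r : ℕ) (K : Matrix (Fin (n + m)) (Fin m) A)
    (I : Finset (Fin (n + m))) (hI : I.card = m)
    (heq : lam ^ r • stackND N D = K * (deltaMat m (n + m) I hI * stackND N D : Matrix (Fin m) (Fin m) A)) :
    (((deltaMat m (n + m) I hI * stackND N D).map
        (algebraMap A (Localization.Away lam))).det ∈
      nonZeroDivisors (Localization.Away lam)) ∧
    (∃ X : Matrix (Fin (n + m)) (Fin n) (Localization.Away lam),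
      letI K' : Matrix (Fin (n + m)) (Fin m) (Localization.Away lam) :=
        (IsLocalization.Away.invSelf (S := Localization.Away lam) lam) ^ r •
          K.map (algebraMap A (Localization.Away lam))
      IsUnit ((Matrix.fromCols K' X).submatrix
          (fun i : Fin (n + m) => i)
          (fun j : Fin (n + m) =>
            finSumFinEquiv.symm (finCongr (Nat.add_comm n m) j))).det ∧
      (stackND N D).map (algebraMap A (Localization.Away lam)) =
        Matrix.fromCols K' X *
          Matrix.fromRows
            ((deltaMat m (n + m) I hI * stackND N D).map
              (algebraMap A (Localization.Away lam)))
            (0 : Matrix (Fin n) (Fin m) (Localization.Away lam))) := by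
  set S := Localization.Away lam
  set K' : Matrix (Fin (n + m)) (Fin m) S :=
    IsLocalization.Away.invSelf (S := S) lam ^ r • K.map (algebraMap A S)
  set M : Matrix (Fin m) (Fin m) S :=
    (deltaMat m (n + m) I hI * stackND N D).map (algebraMap A S)
  have hT : (stackND N D).map (algebraMap A S) = K' * M := map_eq_invSelf_pow_smul_mul lam r heq
  have hM : M.det ∈ nonZeroDivisors S := by
    refine det_mem_nonZeroDivisors_of_stackND_eq_mul ?_ (stackND_map (algebraMap A S) N D ▸ hT)
    rw [← RingHom.mapMatrix_apply, ← RingHom.map_det]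
    exact IsLocalization.nonZeroDivisors_le_comap (.powers lam) S hD
  have hΔK : deltaMat (A := S) m (n + m) I hI * K' = 1 := by
    have hMreg : IsRightRegular M :=
      isRightRegular_iff_nonsingular.mpr (nonsingular_iff_det_mem_nonZeroDivisors.mpr hM)
    refine hMreg (?_ : _ * M = 1 * M)
    rw [Matrix.mul_assoc, ← hT, Matrix.one_mul, ← deltaMat_map (algebraMap A S),
      ← Matrix.map_mul]
    rfl
  have hc : Iᶜ.card = n := by rw [Finset.card_compl, Fintype.card_fin, hI, Nat.add_sub_cancel]
  refine ⟨hM, (deltaMat n (n + m) Iᶜ hc)ᵀ, ?_, ?_⟩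
  · exact isUnit_det_submatrix_of_mul_eq_one (fromRows_mul_fromCols_eq_one (R := S) hΔK
      (deltaMat_mul_deltaMat_compl_transpose (R := S) I hI hc)
      (deltaMat_mul_deltaMat_transpose Iᶜ hc))
      ((finCongr (Nat.add_comm n m)).trans finSumFinEquiv.symm)
  · rw [fromCols_mul_fromRows, Matrix.mul_zero, add_zero, hT]

/-- from a relation `λʳ T = K Δ_I T` (λ not nilpotent, det D a
nonzerodivisor), over `A_λ` the matrix `Δ_I T` is nonsingular and `T` factors as
`[λ⁻ʳK, X] · [(Δ_I T)ᵗ, O]ᵗ` with `[λ⁻ʳK, X]` invertible. -/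
theorem stmt_11 {A : Type*} [CommRing A] {n m : ℕ}
    (lam : A) (hnil : ¬ IsNilpotent lam)
    (N : Matrix (Fin n) (Fin m) A) (D : Matrix (Fin m) (Fin m) A)
    (hD : D.det ∈ nonZeroDivisors A)
    (r : ℕ) (hr : 0 < r) (K : Matrix (Fin (n + m)) (Fin m) A)
    (I : Finset (Fin (n + m))) (hI : I.card = m)
    (heq : lam ^ r • stackND N D = K * (deltaMat m (n + m) I hI * stackND N D : Matrix (Fin m) (Fin m) A)) :
    (((deltaMat m (n + m) I hI * stackND N D).map
        (algebraMap A (Localization.Away lam))).det ∈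
      nonZeroDivisors (Localization.Away lam)) ∧
    (∃ X : Matrix (Fin (n + m)) (Fin n) (Localization.Away lam),
      letI K' : Matrix (Fin (n + m)) (Fin m) (Localization.Away lam) :=
        (IsLocalization.Away.invSelf (S := Localization.Away lam) lam) ^ r •
          K.map (algebraMap A (Localization.Away lam))
      IsUnit ((Matrix.fromCols K' X).submatrix
          (fun i : Fin (n + m) => i)
          (fun j : Fin (n + m) =>
            finSumFinEquiv.symm (finCongr (Nat.add_comm n m) j))).det ∧
      (stackND N D).map (algebraMap A (Localization.Away lam)) =
        Matrix.fromCols K' X *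
          Matrix.fromRows
            ((deltaMat m (n + m) I hI * stackND N D).map
              (algebraMap A (Localization.Away lam)))
            (0 : Matrix (Fin n) (Fin m) (Localization.Away lam))) :=
  stmt_11_general lam N D hD r K I hI heq
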